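/- arXiv:2011.09179 — 4 statements merged into one kernel-verified Lean document; each statement's English description precedes it below -/
import Mathlib

section
/- Let n ≥ 3 and k₂, k₃, ℓ₂ ≥ 0, ℓ₃ ≥ 1 be integers. Then ℓ₃ · s(n,k₂,k₃,ℓ₂,ℓ₃) = n·(ℓ₂+1) · s(n−1, k₂−1, k₃, ℓ₂+1, ℓ₃−1). -/
/-- A cyclically reduced graph structure on `Fin n`: a permutation `σ` of order dividing 2
(whose fixed points are `a`-loops and whose 2-cycles are isolated `a`-edges) together with a
partial injective map `B` satisfying the triangle condition, such that every vertex is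
`b`-adjacent and the structure is connected. -/
def IsCycRed {n : ℕ} (σ : Equiv.Perm (Fin n)) (B : Fin n → Option (Fin n)) : Prop :=
  (∀ v, σ (σ v) = v) ∧
  (∀ v w u, B v = some u → B w = some u → v = w) ∧
  (∀ v w u, B v = some w → B w = some u → B u = some v) ∧
  (∀ v, B v ≠ none ∨ ∃ u, B u = some v) ∧
  (∀ v w : Fin n, Relation.EqvGen (fun x y => σ x = y ∨ B x = some y) v w)

/-- The structure `(σ, B)` has combinatorial type `(n, k₂, k₃, ℓ₂, ℓ₃)`:
`k₂` isolated `a`-edges, `k₃` isolated `b`-edges, `ℓ₂` `a`-loops, `ℓ₃` `b`-loops. -/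
def HasCombType {n : ℕ} (σ : Equiv.Perm (Fin n)) (B : Fin n → Option (Fin n))
    (k2 k3 l2 l3 : ℕ) : Prop :=
  Nat.card {v : Fin n // σ v ≠ v} = 2 * k2 ∧
  Nat.card {v : Fin n // ∃ w, v ≠ w ∧ B v = some w ∧ B w = none} = k3 ∧
  Nat.card {v : Fin n // σ v = v} = l2 ∧
  Nat.card {v : Fin n // B v = some v} = l3

/-- `s n k₂ k₃ ℓ₂ ℓ₃` is the number of cyclically reduced graph structures on `Fin n`
of combinatorial type `(n, k₂, k₃, ℓ₂, ℓ₃)`, with the convention that `s = 0` if any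
argument is negative. -/
noncomputable def s (n k2 k3 l2 l3 : ℤ) : ℕ :=
  if 0 ≤ n ∧ 0 ≤ k2 ∧ 0 ≤ k3 ∧ 0 ≤ l2 ∧ 0 ≤ l3 then
    Nat.card {p : Equiv.Perm (Fin n.toNat) × (Fin n.toNat → Option (Fin n.toNat)) //
      IsCycRed p.1 p.2 ∧ HasCombType p.1 p.2 k2.toNat k3.toNat l2.toNat l3.toNat}
  else 0

/-!
Double counting. In a connected structure on at least two vertices a `b`-loop `v` cannot also be
an `a`-loop, so `v` and `w := σ₂ v` form an isolated `a`-edge. Deleting `v` leaves a cyclically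
reduced structure of type `(n - 1, k₂ - 1, k₃, ℓ₂ + 1, ℓ₃ - 1)` in which `w` is an `a`-loop.
Conversely, a new vertex carrying a `b`-loop, joined by an `a`-edge to a chosen `a`-loop `w`, can
be inserted under any of the `n` labels. So the `ℓ₃ · s(n, …)` pairs (structure, `b`-loop)
correspond to the `n (ℓ₂ + 1) · s(n - 1, …)` triples (label, structure, `a`-loop).
-/

namespace CycRed

open Equiv Relation

variable {α β : Type*}

theorem eqvGen_map {r : α → α → Prop} {s : β → β → Prop} (f : α → β)
    (h : ∀ a b, r a b → EqvGen s (f a) (f b)) {a b : α} (hab : EqvGen r a b) :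
    EqvGen s (f a) (f b) := by
  induction hab with
  | rel x y hxy => exact h x y hxy
  | refl => exact EqvGen.refl _
  | symm _ _ _ ih => exact EqvGen.symm _ _ ih
  | trans _ _ _ _ _ ih₁ ih₂ => exact EqvGen.trans _ _ _ ih₁ ih₂

theorem card_subtype_option_of_not_none [Finite α] {P : Option α → Prop} (h : ¬ P none) :
    Nat.card {o // P o} = Nat.card {x // P (some x)} := by
  classical
  cases nonempty_fintype α
  simp only [Nat.card_eq_fintype_card, Fintype.card_subtype, Finset.card_filter,
    Fintype.sum_option, if_neg h, zero_add]

theorem card_subtype_option_of_none [Finite α] {P : Option α → Prop} (h : P none) :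
    Nat.card {o // P o} = Nat.card {x // P (some x)} + 1 := by
  classical
  cases nonempty_fintype α
  simp only [Nat.card_eq_fintype_card, Fintype.card_subtype, Finset.card_filter,
    Fintype.sum_option, if_pos h, add_comm]

theorem card_subtype_eq_or [Finite α] {Q : α → Prop} {w : α} (hw : ¬ Q w) :
    Nat.card {x // x = w ∨ Q x} = Nat.card {x // Q x} + 1 :=
  Set.ncard_insert_of_notMem hw

theorem card_sigma_of_card_eq {ι : Type*} [Finite ι] {F : ι → Type*} [∀ i, Finite (F i)] {c : ℕ}
    (h : ∀ i, Nat.card (F i) = c) : Nat.card (Σ i, F i) = c * Nat.card ι := by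
  cases nonempty_fintype ι
  rw [Nat.card_sigma, Finset.sum_congr rfl fun i _ => h i, Finset.sum_const, smul_eq_mul,
    Finset.card_univ, Nat.card_eq_fintype_card, mul_comm]

def sigmaSubtypeComm {X V : Type*} (R : X → V → Prop) :
    (Σ x, {v // R x v}) ≃ Σ v, {x // R x v} :=
  (subtypeProdEquivSigmaSubtype R).symm.trans <|
    ((prodComm X V).subtypeEquiv fun _ => Iff.rfl).trans
      (subtypeProdEquivSigmaSubtype fun v x => R x v)

-- `IsCycRed` and `HasCombType` over an arbitrary vertex type, so that vertices can be relabelled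
-- and a vertex can be deleted from `Option α`.
structure Axioms (σ : Perm α) (B : α → Option α) : Prop where
  involutive : ∀ v, σ (σ v) = v
  injective : ∀ v w u, B v = some u → B w = some u → v = w
  triangle : ∀ v w u, B v = some w → B w = some u → B u = some v
  adjacent : ∀ v, B v ≠ none ∨ ∃ u, B u = some v
  connected : ∀ v w, EqvGen (fun x y => σ x = y ∨ B x = some y) v w

structure CombType (σ : Perm α) (B : α → Option α) (k2 k3 l2 l3 : ℕ) : Prop where
  card_moved : Nat.card {v // σ v ≠ v} = 2 * k2
  card_isolatedBEdges : Nat.card {v // ∃ w, v ≠ w ∧ B v = some w ∧ B w = none} = k3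
  card_aLoops : Nat.card {v // σ v = v} = l2
  card_bLoops : Nat.card {v // B v = some v} = l3

def OfType (α : Type*) (k2 k3 l2 l3 : ℕ) : Type _ :=
  {p : Perm α × (α → Option α) // Axioms p.1 p.2 ∧ CombType p.1 p.2 k2 k3 l2 l3}

theorem isCycRed_iff {n : ℕ} {σ : Perm (Fin n)} {B : Fin n → Option (Fin n)} :
    IsCycRed σ B ↔ Axioms σ B :=
  ⟨fun ⟨h₁, h₂, h₃, h₄, h₅⟩ => ⟨h₁, h₂, h₃, h₄, h₅⟩,
    fun ⟨h₁, h₂, h₃, h₄, h₅⟩ => ⟨h₁, h₂, h₃, h₄, h₅⟩⟩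

theorem hasCombType_iff {n : ℕ} {σ : Perm (Fin n)} {B : Fin n → Option (Fin n)}
    {k2 k3 l2 l3 : ℕ} : HasCombType σ B k2 k3 l2 l3 ↔ CombType σ B k2 k3 l2 l3 :=
  ⟨fun ⟨h₁, h₂, h₃, h₄⟩ => ⟨h₁, h₂, h₃, h₄⟩, fun ⟨h₁, h₂, h₃, h₄⟩ => ⟨h₁, h₂, h₃, h₄⟩⟩

theorem s_natCast (n k2 k3 l2 l3 : ℕ) :
    s n k2 k3 l2 l3 = Nat.card (OfType (Fin n) k2 k3 l2 l3) := by
  rw [s, if_pos (by omega)]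
  exact Nat.card_congr (subtypeEquivRight fun p => and_congr isCycRed_iff hasCombType_iff)

instance [Finite α] {k2 k3 l2 l3 : ℕ} : Finite (OfType α k2 k3 l2 l3) := by
  unfold OfType; infer_instance

section BLoop

variable {σ : Perm α} {B : α → Option α} {v : α}

theorem Axioms.eq_some_self_iff (h : Axioms σ B) (hv : B v = some v) (u : α) :
    B u = some v ↔ u = v :=
  ⟨fun hu => h.injective _ _ _ hu hv, by rintro rfl; exact hv⟩

theorem Axioms.eq_of_bLoop_of_aLoop (h : Axioms σ B) (hB : B v = some v) (hσ : σ v = v) (u : α) :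
    u = v := by
  have : EqvGen Iff (u = v) (v = v) := by
    refine eqvGen_map (· = v) (fun a b hab => EqvGen.rel _ _ ?_) (h.connected u v)
    rcases hab with rfl | hab
    · exact ⟨fun ha => ha ▸ hσ, fun ha => σ.injective (ha.trans hσ.symm)⟩
    · exact ⟨fun ha => by simpa [ha, hB, eq_comm] using hab,
        fun hb => (h.eq_some_self_iff hB a).1 (hb ▸ hab)⟩
  rw [Equivalence.eqvGen_eq ⟨Iff.refl, Iff.symm, Iff.trans⟩] at this
  exact this.2 rfl

theorem Axioms.apply_ne_self_of_bLoop [Nontrivial α] (h : Axioms σ B) (hB : B v = some v) :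
    σ v ≠ v := fun hσ =>
  let ⟨u, hu⟩ := exists_ne v
  hu (h.eq_of_bLoop_of_aLoop hB hσ u)

theorem isEmpty_ofType_zero [Finite α] [Nontrivial α] (k3 l2 l3 : ℕ) :
    IsEmpty (OfType α 0 k3 l2 (l3 + 1)) := by
  refine ⟨fun ⟨⟨σ, B⟩, h, hT⟩ => ?_⟩
  obtain ⟨⟨v, hv⟩⟩ : Nonempty {v // B v = some v} :=
    (Nat.card_pos_iff.1 (hT.card_bLoops ▸ Nat.succ_pos l3)).1
  have : Nat.card {v // σ v ≠ v} ≠ 0 :=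
    Nat.card_ne_zero.2 ⟨⟨v, h.apply_ne_self_of_bLoop hv⟩, inferInstance⟩
  exact this hT.card_moved

end BLoop

section Relabel

variable (e : α ≃ β) {σ : Perm α} {B : α → Option α}

def relabelB (B : α → Option α) : β → Option β := fun y => (B (e.symm y)).map e

@[simp] theorem relabelB_apply (x : α) : relabelB e B (e x) = (B x).map e := by
  simp [relabelB]

theorem relabelB_apply_eq_some {x y : α} : relabelB e B (e x) = some (e y) ↔ B x = some y := by
  simp

theorem Axioms.relabel (h : Axioms σ B) : Axioms (e.permCongr σ) (relabelB e B) where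
  involutive := e.forall_congr_right.1 fun x => by simp [h.involutive]
  injective := e.forall_congr_right.1 fun x => e.forall_congr_right.1 fun x' =>
    e.forall_congr_right.1 fun u => by
      simpa only [relabelB_apply_eq_some, e.apply_eq_iff_eq] using h.injective x x' u
  triangle := e.forall_congr_right.1 fun x => e.forall_congr_right.1 fun x' =>
    e.forall_congr_right.1 fun u => by
      simpa only [relabelB_apply_eq_some] using h.triangle x x' u
  adjacent := e.forall_congr_right.1 fun x => by
    simpa [← e.exists_congr_right (q := fun u => relabelB e B u = some (e x))] using h.adjacent x
  connected := e.forall_congr_right.1 fun x => e.forall_congr_right.1 fun x' =>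
    eqvGen_map e (fun a b hab => EqvGen.rel _ _ (by simpa using hab)) (h.connected x x')

theorem CombType.relabel {k2 k3 l2 l3 : ℕ} (h : CombType σ B k2 k3 l2 l3) :
    CombType (e.permCongr σ) (relabelB e B) k2 k3 l2 l3 where
  card_moved := h.card_moved ▸ (Nat.card_congr (e.subtypeEquiv fun x => by simp)).symm
  card_isolatedBEdges := h.card_isolatedBEdges ▸ (Nat.card_congr (e.subtypeEquiv fun x => by
    simp [← e.exists_congr_right (q := fun w => e x ≠ w ∧ _)])).symm
  card_aLoops := h.card_aLoops ▸ (Nat.card_congr (e.subtypeEquiv fun x => by simp)).symm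
  card_bLoops := h.card_bLoops ▸ (Nat.card_congr (e.subtypeEquiv fun x => by simp)).symm

theorem relabelB_symm_relabelB : relabelB e.symm (relabelB e B) = B := by
  funext x; simp [relabelB, Option.map_map]

def ofTypeCongr (k2 k3 l2 l3 : ℕ) : OfType α k2 k3 l2 l3 ≃ OfType β k2 k3 l2 l3 where
  toFun p := ⟨(e.permCongr p.1.1, relabelB e p.1.2), p.2.1.relabel e, p.2.2.relabel e⟩
  invFun p := ⟨(e.symm.permCongr p.1.1, relabelB e.symm p.1.2), p.2.1.relabel e.symm,
    p.2.2.relabel e.symm⟩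
  left_inv p := Subtype.ext <| Prod.ext (by ext; simp) (relabelB_symm_relabelB e)
  right_inv p := Subtype.ext <| Prod.ext (by ext; simp) (relabelB_symm_relabelB e.symm)

def ofTypeCongrBLoop (k2 k3 l2 l3 : ℕ) (v : α) :
    {p : OfType α k2 k3 l2 l3 // p.1.2 v = some v} ≃
      {p : OfType β k2 k3 l2 l3 // p.1.2 (e v) = some (e v)} :=
  (ofTypeCongr e k2 k3 l2 l3).subtypeEquiv fun _ => (relabelB_apply_eq_some e).symm

end Relabel

section Option

variable {σ : Perm (Option α)} {B : Option α → Option (Option α)} {w : α}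

-- `join` would also turn a `b`-edge into `none` into `none`; there is no such edge when `none`
-- carries a `b`-loop.
def removeNoneB (B : Option α → Option (Option α)) (x : α) : Option α := (B (some x)).join

def insertNoneB (C : α → Option α) : Option α → Option (Option α)
  | none => some none
  | some x => (C x).map some

theorem removeNoneB_eq_some_iff {x y : α} :
    removeNoneB B x = some y ↔ B (some x) = some (some y) :=
  Option.join_eq_some_iff

theorem removeNoneB_eq_none_iff (hB : ∀ o, B o = some none ↔ o = none) {x : α} :
    removeNoneB B x = none ↔ B (some x) = none := by
  simp [removeNoneB, Option.join_eq_none_iff, hB]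

@[simp] theorem insertNoneB_none {C : α → Option α} : insertNoneB C none = some none := rfl

@[simp] theorem insertNoneB_some {C : α → Option α} (x : α) :
    insertNoneB C (some x) = (C x).map some := rfl

theorem removeNoneB_insertNoneB {C : α → Option α} : removeNoneB (insertNoneB C) = C := by
  funext x
  cases hx : C x <;> simp [removeNoneB, hx]

theorem insertNoneB_removeNoneB (hB : ∀ o, B o = some none ↔ o = none) :
    insertNoneB (removeNoneB B) = B := by
  funext o
  obtain _ | x := o
  · exact ((hB none).2 rfl).symm
  · have := hB (some x)
    cases hx : B (some x) with
    | none => simp [removeNoneB, hx]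
    | some z => cases z <;> simp_all [removeNoneB]

theorem exists_apply_some_eq_some (hσw : σ (some w) = none) {x : α} (hx : x ≠ w) :
    ∃ y, σ (some x) = some y :=
  Option.ne_none_iff_exists'.1 fun h =>
    hx (Option.some_injective _ (σ.injective (h.trans hσw.symm)))

theorem removeNone_involutive (hσ : ∀ v, σ (σ v) = v) (x : α) :
    removeNone σ (removeNone σ x) = x := by
  have hsymm : (removeNone σ).symm = removeNone σ := by
    rw [removeNone_symm, show σ.symm = σ from Equiv.ext fun v => by rw [σ.symm_apply_eq, hσ]]
  nth_rewrite 1 [← hsymm]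
  exact (removeNone σ).symm_apply_apply x

theorem removeNone_apply_eq_getD (hw : σ none = some w) (x : α) :
    removeNone σ x = (σ (some x)).getD w := by
  cases hx : σ (some x) with
  | none => exact Option.some_injective _ ((removeNone_none σ hx).trans hw)
  | some y => exact Option.some_injective _ ((removeNone_some σ ⟨y, hx⟩).trans hx)

theorem removeNone_apply_eq_iff (hw : σ none = some w) (hσw : σ (some w) = none) {x y : α} :
    removeNone σ x = y ↔ x = w ∧ y = w ∨ σ (some x) = some y := by
  by_cases hx : x = w
  · simp [hx, removeNone_apply_eq_getD hw, hσw, eq_comm]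
  · obtain ⟨z, hz⟩ := exists_apply_some_eq_some hσw hx
    simp [removeNone_apply_eq_getD hw, hz, hx]

theorem removeNone_apply_self (hw : σ none = some w) (hσw : σ (some w) = none) :
    removeNone σ w = w := by
  simp [removeNone_apply_eq_getD hw, hσw]

theorem Axioms.removeNone (h : Axioms σ B) (hB : B none = some none) (hw : σ none = some w) :
    Axioms (removeNone σ) (removeNoneB B) := by
  have hBnone : ∀ o, B o = some none ↔ o = none :=
    fun o => ⟨fun ho => h.injective _ _ _ ho hB, by rintro rfl; exact hB⟩
  refine ⟨removeNone_involutive h.involutive, ?_, ?_, ?_, ?_⟩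
  · intro x x' u hx hx'
    rw [removeNoneB_eq_some_iff] at hx hx'
    exact Option.some_injective _ (h.injective _ _ _ hx hx')
  · intro x y z hxy hyz
    simp only [removeNoneB_eq_some_iff] at *
    exact h.triangle _ _ _ hxy hyz
  · intro x
    rcases h.adjacent (some x) with hx | ⟨u, hu⟩
    · left
      rwa [ne_eq, removeNoneB_eq_none_iff hBnone]
    · right
      cases u with
      | none => simp [hB] at hu
      | some y => exact ⟨y, removeNoneB_eq_some_iff.2 hu⟩
  · intro x y
    refine eqvGen_map (fun o => o.getD w) (fun a b hab => ?_) (h.connected (some x) (some y))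
    rcases hab with hab | hab <;> obtain _ | x := a
    · simp_all [EqvGen.refl]
    · exact EqvGen.rel _ _ (Or.inl (by simp [removeNone_apply_eq_getD hw, hab]))
    · simp_all [EqvGen.refl]
    · obtain _ | y := b
      · exact absurd ((hBnone _).1 hab) (Option.some_ne_none x)
      · exact EqvGen.rel _ _ (Or.inr (removeNoneB_eq_some_iff.2 hab))

variable [DecidableEq α] {τ : Perm α} {C : α → Option α}

def insertNone (τ : Perm α) (w : α) : Perm (Option α) := swap none (some w) * τ.optionCongr

@[simp] theorem insertNone_none : insertNone τ w none = some w := by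
  simp [insertNone]

theorem insertNone_some_self (hw : τ w = w) : insertNone τ w (some w) = none := by
  simp [insertNone, hw]

theorem insertNone_some_of_ne (hw : τ w = w) {x : α} (hx : x ≠ w) :
    insertNone τ w (some x) = some (τ x) := by
  have : τ x ≠ w := fun h => hx (τ.injective (h.trans hw.symm))
  simp [insertNone, swap_apply_of_ne_of_ne, this]

theorem removeNone_insertNone (hw : τ w = w) : removeNone (insertNone τ w) = τ := by
  ext x
  rw [removeNone_apply_eq_getD insertNone_none]
  by_cases hx : x = w
  · simp [hx, insertNone_some_self hw, hw]
  · simp [insertNone_some_of_ne hw hx]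

theorem insertNone_removeNone (hσ : ∀ v, σ (σ v) = v) (hw : σ none = some w) :
    insertNone (removeNone σ) w = σ := by
  have hσw : σ (some w) = none := by rw [← hw, hσ]
  have hfix := removeNone_apply_self hw hσw
  ext1 o
  obtain _ | x := o
  · simp [hw]
  by_cases hx : x = w
  · rw [hx, insertNone_some_self hfix, hσw]
  · obtain ⟨y, hy⟩ := exists_apply_some_eq_some hσw hx
    simp [insertNone_some_of_ne hfix hx, removeNone_apply_eq_getD hw, hy]

theorem Axioms.insertNone (h : Axioms τ C) (hw : τ w = w) :
    Axioms (insertNone τ w) (insertNoneB C) := by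
  refine ⟨?_, ?_, ?_, ?_, ?_⟩
  · rintro (_ | x)
    · rw [insertNone_none, insertNone_some_self hw]
    by_cases hx : x = w
    · rw [hx, insertNone_some_self hw, insertNone_none]
    · have hτx : τ x ≠ w := fun h => hx (τ.injective (h.trans hw.symm))
      rw [insertNone_some_of_ne hw hx, insertNone_some_of_ne hw hτx, h.involutive]
  · rintro (_ | x) (_ | x') (_ | u) hx hx' <;> simp_all
    exact h.injective x x' u hx hx'
  · rintro (_ | x) (_ | y) (_ | z) hxy hyz <;> simp_all
    exact h.triangle x y z hxy hyz
  · rintro (_ | x)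
    · simp
    rcases h.adjacent x with hx | ⟨u, hu⟩
    · left
      simpa using hx
    · exact Or.inr ⟨some u, by simp [hu]⟩
  · have hsome : ∀ x y,
        EqvGen (fun a b => CycRed.insertNone τ w a = b ∨ insertNoneB C a = some b)
          (some x) (some y) := fun x y => by
      refine eqvGen_map some (fun a b hab => ?_) (h.connected x y)
      rcases hab with hab | hab
      · by_cases ha : a = w
        · rw [← hab, ha, hw]
          exact EqvGen.refl _
        · exact EqvGen.rel _ _ (Or.inl (by rw [insertNone_some_of_ne hw ha, hab]))
      · exact EqvGen.rel _ _ (Or.inr (by simp [hab]))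
    have hnone : EqvGen (fun a b => CycRed.insertNone τ w a = b ∨ insertNoneB C a = some b)
        none (some w) := EqvGen.rel _ _ (Or.inl insertNone_none)
    rintro (_ | x) (_ | y)
    · exact EqvGen.refl _
    · exact EqvGen.trans _ _ _ hnone (hsome w y)
    · exact EqvGen.trans _ _ _ (hsome x w) (EqvGen.symm _ _ hnone)
    · exact hsome x y

end Option

section Count

variable [Finite α] {σ : Perm (Option α)} {B : Option α → Option (Option α)} {w : α}

theorem card_aLoops_removeNone (hw : σ none = some w) (hσw : σ (some w) = none) :
    Nat.card {x // removeNone σ x = x} = Nat.card {o // σ o = o} + 1 := by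
  rw [card_subtype_option_of_not_none (P := fun o => σ o = o) (by simp [hw]),
    ← card_subtype_eq_or (w := w) (by simp [hσw])]
  exact Nat.card_congr (subtypeEquivRight fun x => by simp [removeNone_apply_eq_iff hw hσw])

theorem card_moved_removeNone (hw : σ none = some w) (hσw : σ (some w) = none) :
    Nat.card {o // σ o ≠ o} = Nat.card {x // removeNone σ x ≠ x} + 2 := by
  have hmoved : Nat.card {x // σ (some x) ≠ some x} =
      Nat.card {x // x = w ∨ removeNone σ x ≠ x} :=
    Nat.card_congr <| subtypeEquivRight fun x => by
      by_cases hx : x = w <;> simp [hx, hσw, removeNone_apply_eq_iff hw hσw]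
  rw [card_subtype_option_of_none (P := fun o => σ o ≠ o) (by simp [hw]), hmoved,
    card_subtype_eq_or (by simp [removeNone_apply_eq_iff hw hσw])]

theorem card_bLoops_removeNoneB (hB : ∀ o, B o = some none ↔ o = none) :
    Nat.card {o // B o = some o} = Nat.card {x // removeNoneB B x = some x} + 1 := by
  rw [card_subtype_option_of_none (P := fun o => B o = some o) ((hB none).2 rfl)]
  simp only [removeNoneB_eq_some_iff]

theorem card_isolatedBEdges_removeNoneB (hB : ∀ o, B o = some none ↔ o = none) :
    Nat.card {o // ∃ z, o ≠ z ∧ B o = some z ∧ B z = none} =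
      Nat.card {x // ∃ y, x ≠ y ∧ removeNoneB B x = some y ∧ removeNoneB B y = none} := by
  rw [card_subtype_option_of_not_none (P := fun o => ∃ z, o ≠ z ∧ B o = some z ∧ B z = none)
    (by simp [(hB none).2 rfl])]
  refine Nat.card_congr (subtypeEquivRight fun x => ⟨?_, ?_⟩)
  · rintro ⟨_ | y, hxy, hx, hy⟩
    · exact absurd ((hB _).1 hx) (Option.some_ne_none x)
    · exact ⟨y, by simpa using hxy, removeNoneB_eq_some_iff.2 hx,
        (removeNoneB_eq_none_iff hB).2 hy⟩
  · rintro ⟨y, hxy, hx, hy⟩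
    exact ⟨some y, by simpa using hxy, removeNoneB_eq_some_iff.1 hx,
      (removeNoneB_eq_none_iff hB).1 hy⟩

theorem combType_removeNone_iff (hw : σ none = some w) (hσw : σ (some w) = none)
    (hB : ∀ o, B o = some none ↔ o = none) {k2 k3 l2 l3 : ℕ} :
    CombType σ B (k2 + 1) k3 l2 (l3 + 1) ↔
      CombType (removeNone σ) (removeNoneB B) k2 k3 (l2 + 1) l3 := by
  have := card_aLoops_removeNone hw hσw
  have := card_moved_removeNone hw hσw
  have := card_bLoops_removeNoneB hB
  have := card_isolatedBEdges_removeNoneB hB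
  constructor <;> rintro ⟨h₁, h₂, h₃, h₄⟩ <;> constructor <;> omega

end Count

section Core

variable [Finite α] [DecidableEq α] [Nonempty α]

def removeNoneEquiv (k2 k3 l2 l3 : ℕ) :
    {p : OfType (Option α) (k2 + 1) k3 l2 (l3 + 1) // p.1.2 none = some none} ≃
      Σ q : OfType α k2 k3 (l2 + 1) l3, {w // q.1.1 w = w} where
  toFun p :=
    have hw : p.1.1.1 none = some ((p.1.1.1 none).get
        (Option.isSome_iff_ne_none.2 (p.1.2.1.apply_ne_self_of_bLoop p.2))) :=
      (Option.some_get _).symm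
    have hσw := by rw [← hw, p.1.2.1.involutive]
    ⟨⟨(removeNone p.1.1.1, removeNoneB p.1.1.2), p.1.2.1.removeNone p.2 hw,
      (combType_removeNone_iff hw hσw (p.1.2.1.eq_some_self_iff p.2)).1 p.1.2.2⟩,
      _, removeNone_apply_self hw hσw⟩
  invFun q :=
    have h := q.1.2.1.insertNone q.2.2
    ⟨⟨(insertNone q.1.1.1 q.2.1, insertNoneB q.1.1.2), h,
      (combType_removeNone_iff insertNone_none (insertNone_some_self q.2.2)
        (h.eq_some_self_iff rfl)).2
        (by rw [removeNone_insertNone q.2.2, removeNoneB_insertNoneB]; exact q.1.2.2)⟩, rfl⟩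
  left_inv p := Subtype.ext <| Subtype.ext <| Prod.ext
    (insertNone_removeNone p.1.2.1.involutive (Option.some_get _).symm)
    (insertNoneB_removeNoneB (p.1.2.1.eq_some_self_iff p.2))
  right_inv q := Sigma.subtype_ext
    (Subtype.ext <| Prod.ext (removeNone_insertNone q.2.2) removeNoneB_insertNoneB) (by simp)

theorem card_ofType_option_bLoop_none (k2 k3 l2 l3 : ℕ) :
    Nat.card {p : OfType (Option α) (k2 + 1) k3 l2 (l3 + 1) // p.1.2 none = some none} =
      (l2 + 1) * Nat.card (OfType α k2 k3 (l2 + 1) l3) := by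
  rw [Nat.card_congr (removeNoneEquiv k2 k3 l2 l3)]
  exact card_sigma_of_card_eq fun q => q.2.2.card_aLoops

end Core

theorem succ_mul_card_ofType_succ (m k2 k3 l2 l3 : ℕ) [NeZero m] :
    (l3 + 1) * Nat.card (OfType (Fin (m + 1)) (k2 + 1) k3 l2 (l3 + 1)) =
      (m + 1) * (l2 + 1) * Nat.card (OfType (Fin m) k2 k3 (l2 + 1) l3) := by
  calc (l3 + 1) * Nat.card (OfType (Fin (m + 1)) (k2 + 1) k3 l2 (l3 + 1))
      = Nat.card (Σ p : OfType (Fin (m + 1)) (k2 + 1) k3 l2 (l3 + 1), {v // p.1.2 v = some v}) :=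
        (card_sigma_of_card_eq fun p => p.2.2.card_bLoops).symm
    _ = Nat.card (Σ v : Fin (m + 1),
          {p : OfType (Fin (m + 1)) (k2 + 1) k3 l2 (l3 + 1) // p.1.2 v = some v}) :=
        Nat.card_congr (sigmaSubtypeComm _)
    _ = Nat.card (Fin (m + 1) ×
          {p : OfType (Option (Fin m)) (k2 + 1) k3 l2 (l3 + 1) // p.1.2 none = some none}) :=
        Nat.card_congr <| (sigmaCongrRight fun v =>
          (ofTypeCongrBLoop (finSuccEquiv' v) _ _ _ _ v).trans
            (subtypeEquivRight fun p => by rw [finSuccEquiv'_at])).trans (sigmaEquivProd _ _)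
    _ = (m + 1) * (l2 + 1) * Nat.card (OfType (Fin m) k2 k3 (l2 + 1) l3) := by
        rw [Nat.card_prod, Nat.card_fin, card_ofType_option_bLoop_none, mul_assoc]

end CycRed

theorem stmt0 (n k2 k3 l2 l3 : ℤ) (hn : 3 ≤ n) (hk2 : 0 ≤ k2) (hk3 : 0 ≤ k3)
    (hl2 : 0 ≤ l2) (hl3 : 1 ≤ l3) :
    l3 * (s n k2 k3 l2 l3 : ℤ) =
      n * (l2 + 1) * (s (n - 1) (k2 - 1) k3 (l2 + 1) (l3 - 1) : ℤ) := by
  obtain ⟨m, rfl⟩ : ∃ m : ℕ, n = m + 1 + 1 := ⟨(n - 2).toNat, by omega⟩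
  obtain ⟨d, rfl⟩ : ∃ d : ℕ, l3 = d + 1 := ⟨(l3 - 1).toNat, by omega⟩
  lift k2 to ℕ using hk2
  lift k3 to ℕ using hk3
  lift l2 to ℕ using hl2
  simp only [add_sub_cancel_right]
  cases k2 with
  | zero =>
    have := CycRed.isEmpty_ofType_zero (α := Fin (m + 1 + 1)) k3 l2 d
    have h := CycRed.s_natCast (m + 1 + 1) 0 k3 l2 (d + 1)
    push_cast at h ⊢
    rw [h, Nat.card_of_isEmpty, s, if_neg (by omega)]
    simp
  | succ a =>
    have h₁ := CycRed.s_natCast (m + 1 + 1) (a + 1) k3 l2 (d + 1)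
    have h₂ := CycRed.s_natCast (m + 1) a k3 (l2 + 1) d
    push_cast at h₁ h₂ ⊢
    rw [add_sub_cancel_right, h₁, h₂]
    exact_mod_cast CycRed.succ_mul_card_ofType_succ (m + 1) a k3 l2 d
end

section
/- Let (A, B, v₀) be a rooted reduced graph structure on Fin n, and let π be a permutation of Fin n such that π v₀ = v₀ and for all v ∈ Fin n, A (π v) = Option.map π (A v) and B (π v) = Option.map π (B v). Then π is the identity permutation. (Consequently, every rooted reduced graph of size n admits exactly n! distinct labelings, so the number of finitely generated subgroups of PSL₂(ℤ) of a given combinatorial type is L(τ)/n!.) -/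
/-!
Both edge maps commute with `π`, so the set of fixed points of `π` is closed under following an
`A`- or `B`-edge forwards, and also backwards: `A` is symmetric and `B` is injective on its domain.
It contains the root, hence by connectedness it is everything.
-/

theorem Relation.EqvGen.eq_of_forall_rel {α β : Type*} {r : α → α → Prop} {f : α → β}
    (h : ∀ a b, r a b → f a = f b) {a b : α} (hab : Relation.EqvGen r a b) : f a = f b :=
  congrArg (Quot.lift f h) (Quot.eqvGen_sound hab)

namespace Function.IsFixedPt

variable {α : Type*} {f : α → Option α} {π : α → α} {x y : α}

theorem of_eq_some (hπ : ∀ v, f (π v) = (f v).map π) (h : f x = some y)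
    (hx : IsFixedPt π x) : IsFixedPt π y := by
  have := hπ x
  rw [hx, h, Option.map_some] at this
  exact (Option.some_injective _ this).symm

theorem of_eq_some_of_injOn (hπ : ∀ v, f (π v) = (f v).map π)
    (hinj : ∀ v w u, f v = some u → f w = some u → v = w) (h : f x = some y)
    (hy : IsFixedPt π y) : IsFixedPt π x :=
  hinj _ _ _ (by rw [hπ, h, Option.map_some, hy]) h

end Function.IsFixedPt

theorem stmt4_general {n : ℕ} (A B : Fin n → Option (Fin n)) (v0 : Fin n)
    (hA : ∀ v w, A v = some w ↔ A w = some v)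
    (hBinj : ∀ v w u, B v = some u → B w = some u → v = w)
    (hconn : ∀ v w : Fin n, Relation.EqvGen (fun x y => A x = some y ∨ B x = some y) v w)
    (π : Equiv.Perm (Fin n)) (hv0 : π v0 = v0)
    (hπA : ∀ v, A (π v) = Option.map π (A v))
    (hπB : ∀ v, B (π v) = Option.map π (B v)) :
    π = 1 := by
  have hedge : ∀ x y, (A x = some y ∨ B x = some y) →
      Function.IsFixedPt π x = Function.IsFixedPt π y := by
    rintro x y (hxy | hxy)
    · exact propext ⟨.of_eq_some hπA hxy, .of_eq_some hπA ((hA x y).mp hxy)⟩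
    · exact propext ⟨.of_eq_some hπB hxy, .of_eq_some_of_injOn hπB hBinj hxy⟩
  exact Equiv.ext fun v => cast ((hconn v0 v).eq_of_forall_rel hedge) hv0

/-- A rooted reduced graph structure on `Fin n` (the labeled Stallings graph of a finitely
generated subgroup of `PSL₂(ℤ)`) admits no non-trivial label-preserving automorphism fixing
the root. -/
theorem stmt4 {n : ℕ} (A B : Fin n → Option (Fin n)) (v0 : Fin n)
    (hA : ∀ v w, A v = some w ↔ A w = some v)
    (hBinj : ∀ v w u, B v = some u → B w = some u → v = w)
    (hBtri : ∀ v w u, B v = some w → B w = some u → B u = some v)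
    (hroot : ∀ v, v ≠ v0 → A v ≠ none ∧ (B v ≠ none ∨ ∃ u, B u = some v))
    (hconn : ∀ v w : Fin n, Relation.EqvGen (fun x y => A x = some y ∨ B x = some y) v w)
    (π : Equiv.Perm (Fin n)) (hv0 : π v0 = v0)
    (hπA : ∀ v, A (π v) = Option.map π (A v))
    (hπB : ∀ v, B (π v) = Option.map π (B v)) :
    π = 1 :=
  stmt4_general A B v0 hA hBinj hconn π hv0 hπA hπB
end

section
/- Let H be a subgroup of G, let w ∈ G be an element of infinite order, let y ∈ G and let m ≥ 2 be an integer such that y w^m y⁻¹ ∈ H but y w y⁻¹ ∉ H. Then H is not almost malnormal: there exists z ∈ G with z ∉ H such that H ∩ zHz⁻¹ is infinite. -/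
/-!
Take `z = y w y⁻¹ ∉ H`. It commutes with `u = z ^ m = y w^m y⁻¹ ∈ H`, so every power of `u`
lies in `H ∩ z H z⁻¹`; these powers are pairwise distinct because `u`, a nonzero power of a
conjugate of `w`, has infinite order.
-/

/-- The free product `(ℤ/2ℤ) ∗ (ℤ/3ℤ)`, isomorphic to the modular group `PSL₂(ℤ)`. -/
abbrev G : Type := Monoid.Coprod (Multiplicative (ZMod 2)) (Multiplicative (ZMod 3))

theorem Subgroup.infinite_setOf_mem_and_conj_mem {K : Type*} [Group K] {H : Subgroup K}
    {u z : K} (hu : u ∈ H) (hinf : ¬IsOfFinOrder u) (hcomm : Commute z u) :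
    {g : K | g ∈ H ∧ z⁻¹ * g * z ∈ H}.Infinite :=
  Set.infinite_of_injective_forall_mem (injective_pow_iff_not_isOfFinOrder.mpr hinf) fun n =>
    ⟨H.pow_mem hu n, by rw [(hcomm.pow_right n).inv_mul_cancel]; exact H.pow_mem hu n⟩

/-- If some power `w^m` (`m ≥ 2`) of an infinite-order element `w` of `G` lies in `H` after
conjugation by `y`, while `y w y⁻¹ ∉ H`, then `H` is not almost malnormal: there is
`z ∉ H` with `H ∩ zHz⁻¹` infinite. -/
theorem stmt11 (H : Subgroup G) (w y : G) (m : ℕ) (hm : 2 ≤ m)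
    (hw : ¬ IsOfFinOrder w)
    (h1 : y * w ^ m * y⁻¹ ∈ H) (h2 : y * w * y⁻¹ ∉ H) :
    ∃ z : G, z ∉ H ∧ {g : G | g ∈ H ∧ z⁻¹ * g * z ∈ H}.Infinite := by
  have hzw : IsConj (y * w * y⁻¹) w := isConj_iff.mpr ⟨y⁻¹, by group⟩
  set z := y * w * y⁻¹
  have hz : ¬IsOfFinOrder z := fun h => hw (hzw.isOfFinOrder h)
  have hzm : ¬IsOfFinOrder (z ^ m) := by
    rw [isOfFinOrder_pow]
    exact fun h => h.elim hz (by omega)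
  rw [← conj_pow] at h1
  exact ⟨z, h2, H.infinite_setOf_mem_and_conj_mem h1 hzm ((Commute.refl z).pow_right m)⟩
end

section
/- Fix n a positive multiple of 6 and σ₃ a permutation of Fin n of order 3 with no fixed points; call the orbits of σ₃ triangles. Let σ₂ be a fixed-point-free involution of Fin n and let J₁, …, J_k be pairwise distinct sets of triangles, each of cardinality at least 2, such that for every i there exists an orbit O_i of the permutation σ₃ ∘ σ₂ meeting every triangle of J_i in exactly one point and meeting no triangle outside J_i. For j = 2, 3 let t_j denote the number of triangles that belong to exactly j of the sets J₁, …, J_k. Then t₂ + t₃ is even. -/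
/-!
Let `S` be the union of the orbits `O_i` of `σ₃ * σ₂`; they are pairwise disjoint because the
`J_i` are distinct, so a triangle `T` lies in exactly `|T ∩ S|` of the sets `J_i`. Count
`D = {x ∈ S | σ₃ x ∈ S}` in two ways. Since `σ₃ * σ₂` preserves `S`, the fixed-point-free
involution `σ₂` maps `D` to itself, so `|D|` is even. A triangle meeting `S` in two points
contains one point of `D`, one contained in `S` contains three, any other none, so
`|D| = t₂ + 3 t₃`.
-/

/-- `T` is a triangle for `σ₃`: an orbit of `σ₃` (a set of the form
`{v, σ₃ v, σ₃ (σ₃ v)}` when `σ₃` has order 3 without fixed points). -/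
def IsTriangle {n : ℕ} (σ3 : Equiv.Perm (Fin n)) (T : Set (Fin n)) : Prop :=
  ∃ v : Fin n, T = {w : Fin n | σ3.SameCycle v w}

/-- Some orbit of `σ₃ ∘ σ₂` meets every triangle of `I` in exactly one point and meets no
triangle outside `I` (a simple `ab`-cycle visiting exactly the triangles of `I`). -/
def HasSimpleCycleOn {n : ℕ} (σ3 σ2 : Equiv.Perm (Fin n)) (I : Set (Set (Fin n))) : Prop :=
  ∃ v : Fin n, ∀ T : Set (Fin n), IsTriangle σ3 T →
    (T ∈ I → ∃! x : Fin n, x ∈ T ∧ (σ3 * σ2).SameCycle v x) ∧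
    (T ∉ I → ∀ x ∈ T, ¬ (σ3 * σ2).SameCycle v x)

open Finset Equiv Function

theorem Finset.even_card_of_involution {α : Type*} {s : Finset α} (g : α → α)
    (hg_mem : ∀ a ∈ s, g a ∈ s) (hg_invol : ∀ a ∈ s, g (g a) = a) (hg_ne : ∀ a ∈ s, g a ≠ a) :
    Even #s := by
  rw [← ZMod.natCast_eq_zero_iff_even, card_eq_sum_ones, Nat.cast_sum, Nat.cast_one]
  exact sum_involution (fun a _ => g a) (fun _ _ => by decide) (fun a ha _ => hg_ne a ha)
    hg_mem hg_invol

theorem Set.natCard_inter_iUnion_of_pairwise_disjoint {α ι : Type*} {O : ι → Set α}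
    (hO : Pairwise (Disjoint on O)) {T : Set α} (hT : ∀ i, (T ∩ O i).Subsingleton) :
    Nat.card ↥(T ∩ ⋃ i, O i) = Nat.card {i // (T ∩ O i).Nonempty} := by
  choose idx hidx using fun x : ↥(T ∩ ⋃ i, O i) => mem_iUnion.1 x.2.2
  refine Nat.card_eq_of_bijective (fun x => ⟨idx x, x, x.2.1, hidx x⟩) ⟨?_, ?_⟩
  · intro x y hxy
    have hi : idx x = idx y := congrArg Subtype.val hxy
    exact Subtype.ext (hT (idx x) ⟨x.2.1, hidx x⟩ ⟨y.2.1, hi ▸ hidx y⟩)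
  · rintro ⟨i, x, hxT, hxi⟩
    let x' : ↥(T ∩ ⋃ i, O i) := ⟨x, hxT, mem_iUnion.2 ⟨i, hxi⟩⟩
    refine ⟨x', Subtype.ext ?_⟩
    by_contra hne
    exact Set.disjoint_left.1 (hO hne) (hidx x') hxi

namespace Equiv.Perm

variable {α : Type*}

theorem sameCycle_iff_of_orderOf_eq_three [Finite α] {σ : Perm α} (hσ : orderOf σ = 3)
    {x y : α} : σ.SameCycle x y ↔ y = x ∨ y = σ x ∨ y = σ (σ x) := by
  constructor
  · intro h
    obtain ⟨i, hi, rfl⟩ := h.exists_pow_eq'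
    rw [hσ] at hi
    interval_cases i <;> simp [pow_succ]
  · rintro (rfl | rfl | rfl)
    · exact SameCycle.refl _ _
    · exact (SameCycle.refl _ _).apply_right
    · exact (SameCycle.refl _ _).apply_right.apply_right

theorem apply_apply_apply_of_orderOf_eq_three {σ : Perm α} (hσ : orderOf σ = 3) (x : α) :
    σ (σ (σ x)) = x := by
  rw [← mul_apply, ← mul_apply, ← pow_three', ← hσ, pow_orderOf_eq_one, one_apply]

theorem setOf_sameCycle_eq_iff {σ : Perm α} {x y : α} :
    {z | σ.SameCycle y z} = {z | σ.SameCycle x z} ↔ σ.SameCycle x y := by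
  refine ⟨fun h => h.subset (SameCycle.refl σ y), fun h => ?_⟩
  ext z
  exact ⟨h.trans, h.symm.trans⟩

theorem mapsTo_inter_preimage_of_preimage_mul_eq {σ2 σ3 : Perm α} {S : Set α}
    (hS : (σ3 * σ2) ⁻¹' S = S) (hσ2 : Involutive σ2) :
    Set.MapsTo σ2 (S ∩ σ3 ⁻¹' S) (S ∩ σ3 ⁻¹' S) := by
  intro x ⟨hx, hσ3x⟩
  rw [← hS] at hx
  refine ⟨?_, hx⟩
  rw [← hS]
  simpa [hσ2 x] using hσ3x

theorem card_filter_and_apply_of_three_cycle [DecidableEq α] {σ : Perm α} {x : α}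
    (hx : σ (σ (σ x)) = x) (hfix : ∀ y, σ y ≠ y) (P : α → Prop) [DecidablePred P] :
    #{y ∈ {x, σ x, σ (σ x)} | P y ∧ P (σ y)} =
      (if #{y ∈ {x, σ x, σ (σ x)} | P y} = 2 then 1 else 0) +
        3 * (if #{y ∈ {x, σ x, σ (σ x)} | P y} = 3 then 1 else 0) := by
  have h01 : x ≠ σ x := (hfix x).symm
  have h12 : σ x ≠ σ (σ x) := (hfix (σ x)).symm
  have h02 : x ≠ σ (σ x) := fun h => hfix x (by conv_lhs => rw [h]; exact hx)
  simp only [card_filter, sum_insert (by simp [h01, h02] : x ∉ ({σ x, σ (σ x)} : Finset α)),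
    sum_insert (by simp [h12] : σ x ∉ ({σ (σ x)} : Finset α)), sum_singleton, hx]
  by_cases ha : P x <;> by_cases hb : P (σ x) <;> by_cases hc : P (σ (σ x)) <;> simp [ha, hb, hc]

end Equiv.Perm

section Triangles

open Equiv.Perm

variable {n : ℕ} {σ : Perm (Fin n)}

theorem card_filter_mem_and_apply_mem_eq (hσ : orderOf σ = 3) (hfix : ∀ x, σ x ≠ x)
    (S : Set (Fin n)) [DecidablePred (· ∈ S)] (c : Set (Fin n) → ℕ)
    (hc : ∀ x, c {y | σ.SameCycle x y} = Nat.card ↥({y | σ.SameCycle x y} ∩ S)) :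
    #{x | x ∈ S ∧ σ x ∈ S} =
      Nat.card {T // IsTriangle σ T ∧ c T = 2} + 3 * Nat.card {T // IsTriangle σ T ∧ c T = 3} := by
  classical
  have mem_triple : ∀ x y, y ∈ ({x, σ x, σ (σ x)} : Finset _) ↔ σ.SameCycle x y := by
    simp [sameCycle_iff_of_orderOf_eq_three hσ]
  have c_eq : ∀ x, c {y | σ.SameCycle x y} = #{y ∈ {x, σ x, σ (σ x)} | y ∈ S} := by
    intro x
    rw [hc, Nat.card_eq_card_toFinset]
    congr 1
    ext y
    simp [mem_triple]
  have fiber : ∀ x, #{y ∈ {y | y ∈ S ∧ σ y ∈ S} | {z | σ.SameCycle y z} = {z | σ.SameCycle x z}} =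
      (if c {z | σ.SameCycle x z} = 2 then 1 else 0) +
        3 * (if c {z | σ.SameCycle x z} = 3 then 1 else 0) := by
    intro x
    rw [c_eq, ← card_filter_and_apply_of_three_cycle
      (apply_apply_apply_of_orderOf_eq_three hσ x) hfix]
    congr 1
    ext y
    simp only [mem_filter, mem_univ, true_and, setOf_sameCycle_eq_iff, mem_triple]
    tauto
  have natCard_eq : ∀ m, Nat.card {T // IsTriangle σ T ∧ c T = m} =
      #{T ∈ {T | IsTriangle σ T} | c T = m} := by
    intro m
    rw [Nat.card_eq_fintype_card, Fintype.card_subtype, filter_filter]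
  rw [card_eq_sum_card_fiberwise (f := fun x => {z | σ.SameCycle x z})
    (t := {T | IsTriangle σ T}) (fun x _ => by simpa using ⟨x, rfl⟩), natCard_eq, natCard_eq,
    card_filter, card_filter, mul_sum, ← sum_add_distrib]
  refine sum_congr rfl fun T hT => ?_
  obtain ⟨x, rfl⟩ := (mem_filter.1 hT).2
  exact fiber x

variable {σ2 : Perm (Fin n)} {I I' : Set (Set (Fin n))} {v v' : Fin n} {T : Set (Fin n)}

/-- `HasSimpleCycleOn σ3 σ2 I` unfolds to `∃ v, IsSimpleCycleThrough σ3 σ2 I v`. -/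
def IsSimpleCycleThrough (σ3 σ2 : Perm (Fin n)) (I : Set (Set (Fin n))) (v : Fin n) : Prop :=
  ∀ T : Set (Fin n), IsTriangle σ3 T →
    (T ∈ I → ∃! x : Fin n, x ∈ T ∧ (σ3 * σ2).SameCycle v x) ∧
    (T ∉ I → ∀ x ∈ T, ¬ (σ3 * σ2).SameCycle v x)

namespace IsSimpleCycleThrough

theorem mem_iff (h : IsSimpleCycleThrough σ σ2 I v) (hT : IsTriangle σ T) :
    T ∈ I ↔ (T ∩ {w | (σ * σ2).SameCycle v w}).Nonempty := by
  refine ⟨fun hI => ?_, fun ⟨x, hxT, hx⟩ => ?_⟩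
  · obtain ⟨x, hx, -⟩ := (h T hT).1 hI
    exact ⟨x, hx⟩
  · by_contra hI
    exact (h T hT).2 hI x hxT hx

theorem inter_subsingleton (h : IsSimpleCycleThrough σ σ2 I v) (hT : IsTriangle σ T) :
    (T ∩ {w | (σ * σ2).SameCycle v w}).Subsingleton := by
  intro x hx y hy
  by_cases hI : T ∈ I
  · exact (h T hT).1 hI |>.unique hx hy
  · exact absurd hx.2 ((h T hT).2 hI x hx.1)

theorem eq_of_sameCycle (h : IsSimpleCycleThrough σ σ2 I v)
    (h' : IsSimpleCycleThrough σ σ2 I' v') (hI : ∀ T ∈ I, IsTriangle σ T)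
    (hI' : ∀ T ∈ I', IsTriangle σ T) (hvv' : (σ * σ2).SameCycle v v') : I = I' := by
  have orbit_eq : {w | (σ * σ2).SameCycle v w} = {w | (σ * σ2).SameCycle v' w} :=
    (setOf_sameCycle_eq_iff.2 hvv').symm
  ext T
  constructor
  · intro hT
    rwa [h'.mem_iff (hI T hT), ← orbit_eq, ← h.mem_iff (hI T hT)]
  · intro hT
    rwa [h.mem_iff (hI' T hT), orbit_eq, ← h'.mem_iff (hI' T hT)]

end IsSimpleCycleThrough

end Triangles

theorem stmt13_general {n : ℕ}
    (σ3 : Equiv.Perm (Fin n)) (hσ3 : orderOf σ3 = 3) (hσ3' : ∀ v, σ3 v ≠ v)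
    (σ2 : Equiv.Perm (Fin n)) (hσ2 : ∀ v, σ2 v ≠ v ∧ σ2 (σ2 v) = v)
    (k : ℕ) (J : Fin k → Set (Set (Fin n)))
    (hJdist : Function.Injective J)
    (hJtri : ∀ i, ∀ T ∈ J i, IsTriangle σ3 T)
    (hJcyc : ∀ i, HasSimpleCycleOn σ3 σ2 (J i)) :
    Even (Nat.card {T : Set (Fin n) //
        IsTriangle σ3 T ∧ Nat.card {i : Fin k // T ∈ J i} = 2} +
      Nat.card {T : Set (Fin n) //
        IsTriangle σ3 T ∧ Nat.card {i : Fin k // T ∈ J i} = 3}) := by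
  classical
  obtain ⟨v, hv⟩ : ∃ v : Fin k → Fin n, ∀ i, IsSimpleCycleThrough σ3 σ2 (J i) (v i) :=
    Classical.skolem.1 hJcyc
  set O : Fin k → Set (Fin n) := fun i => {w | (σ3 * σ2).SameCycle (v i) w}
  set S := ⋃ i, O i
  have hO : Pairwise (Disjoint on O) := fun i j hij =>
    Set.disjoint_left.2 fun w hwi hwj =>
      hij (hJdist ((hv i).eq_of_sameCycle (hv j) (hJtri i) (hJtri j) (hwi.trans hwj.symm)))
  have hS : (σ3 * σ2) ⁻¹' S = S := by
    ext x
    simp only [S, O, Set.mem_preimage, Set.mem_iUnion, Set.mem_ofPred_eq,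
      Perm.sameCycle_apply_right]
  have count : ∀ x, Nat.card {i // {y | σ3.SameCycle x y} ∈ J i} =
      Nat.card ↥({y | σ3.SameCycle x y} ∩ S) := by
    intro x
    rw [Set.natCard_inter_iUnion_of_pairwise_disjoint hO
      (fun i => (hv i).inter_subsingleton ⟨x, rfl⟩)]
    exact Nat.card_congr (Equiv.subtypeEquivRight fun i => (hv i).mem_iff ⟨x, rfl⟩)
  have even : Even #{x | x ∈ S ∧ σ3 x ∈ S} := by
    refine even_card_of_involution σ2 (fun x hx => ?_) (fun x _ => (hσ2 x).2)
      (fun x _ => (hσ2 x).1)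
    simp only [mem_filter, mem_univ, true_and] at hx ⊢
    exact Perm.mapsTo_inter_preimage_of_preimage_mul_eq hS (fun y => (hσ2 y).2) hx
  rw [card_filter_mem_and_apply_mem_eq hσ3 hσ3' S (fun T => Nat.card {i // T ∈ J i}) count]
    at even
  simpa [Nat.even_add, Nat.even_mul, show ¬Even 3 by decide] using even

/-- If each of the pairwise distinct sets of triangles `J₁, …, J_k` (of cardinality at
least 2) is visited by a simple `ab`-cycle of `(σ₂, σ₃)`, and `t_j` is the number of
triangles belonging to exactly `j` of the sets `Jᵢ`, then `t₂ + t₃` is even. -/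
theorem stmt13 {n : ℕ} (hn : 0 < n) (h6 : 6 ∣ n)
    (σ3 : Equiv.Perm (Fin n)) (hσ3 : orderOf σ3 = 3) (hσ3' : ∀ v, σ3 v ≠ v)
    (σ2 : Equiv.Perm (Fin n)) (hσ2 : ∀ v, σ2 v ≠ v ∧ σ2 (σ2 v) = v)
    (k : ℕ) (J : Fin k → Set (Set (Fin n)))
    (hJdist : Function.Injective J)
    (hJtri : ∀ i, ∀ T ∈ J i, IsTriangle σ3 T)
    (hJcard : ∀ i, 2 ≤ (J i).ncard)
    (hJcyc : ∀ i, HasSimpleCycleOn σ3 σ2 (J i)) :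
    Even (Nat.card {T : Set (Fin n) //
        IsTriangle σ3 T ∧ Nat.card {i : Fin k // T ∈ J i} = 2} +
      Nat.card {T : Set (Fin n) //
        IsTriangle σ3 T ∧ Nat.card {i : Fin k // T ∈ J i} = 3}) :=
  stmt13_general σ3 hσ3 hσ3' σ2 hσ2 k J hJdist hJtri hJcyc
end
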